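/- arXiv:1511.06563 — 2 statements merged into one kernel-verified Lean document; each statement's English description precedes it below -/
import Mathlib

section
/- For any A in SL(2,R) over a commutative ring R and any g in SL(2,R), setting B' = gAg⁻¹, we have trace(Aⁿ B') = trace(B'ⁿ A) for all n ≥ 1. -/
lemma adjugate_eq_trace_smul_one_sub {R : Type*} [CommRing R] (M : Matrix (Fin 2) (Fin 2) R) :
    M.adjugate = M.trace • (1 : Matrix (Fin 2) (Fin 2) R) - M := by
  rw [Matrix.adjugate_fin_two]
  ext i j
  fin_cases i <;> fin_cases j <;>
    simp [Matrix.trace_fin_two, Matrix.one_apply]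

theorem trace_pow_mul_conj {R : Type*} [CommRing R]
    (A g : Matrix.SpecialLinearGroup (Fin 2) R) (B' : Matrix.SpecialLinearGroup (Fin 2) R)
    (hB' : B' = g * A * g⁻¹) (n : ℕ) (hn : 1 ≤ n) :
    Matrix.trace ((A ^ n * B' : Matrix.SpecialLinearGroup (Fin 2) R) : Matrix (Fin 2) (Fin 2) R)
      = Matrix.trace ((B' ^ n * A : Matrix.SpecialLinearGroup (Fin 2) R) : Matrix (Fin 2) (Fin 2) R) := by
  subst hB'
  have hpow : (g * A * g⁻¹) ^ n = g * A ^ n * g⁻¹ := by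
    exact conj_pow ..
  set a : Matrix (Fin 2) (Fin 2) R := (A : Matrix (Fin 2) (Fin 2) R)
  set gm : Matrix (Fin 2) (Fin 2) R := (g : Matrix (Fin 2) (Fin 2) R)
  have hinv : ((g⁻¹ : Matrix.SpecialLinearGroup (Fin 2) R) : Matrix (Fin 2) (Fin 2) R)
      = gm.trace • (1 : Matrix (Fin 2) (Fin 2) R) - gm := by
    rw [Matrix.SpecialLinearGroup.coe_inv, adjugate_eq_trace_smul_one_sub]
  rw [hpow]
  simp only [Matrix.SpecialLinearGroup.coe_mul, Matrix.SpecialLinearGroup.coe_pow, hinv]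
  simp only [mul_sub, sub_mul, Matrix.mul_smul, Matrix.smul_mul, mul_one, one_mul,
    Matrix.trace_sub, Matrix.trace_smul, smul_eq_mul]
  have h1 : (a ^ n * (gm * a)).trace = (gm * a ^ n * a).trace := by
    rw [Matrix.trace_mul_comm, mul_assoc, mul_assoc, ← pow_succ', ← pow_succ]
  have h2 : (a ^ n * (gm * a * gm)).trace = (gm * a ^ n * gm * a).trace := by
    rw [← mul_assoc, Matrix.trace_mul_comm, ← mul_assoc, ← mul_assoc]
  rw [h1, h2]
end

section
/- For A, B ∈ SL(2,ℝ) both hyperbolic whose axes in ℍ intersect in exactly one point, the product AB is hyperbolic, and cosh(τ(AB)/2) = cosh(τ(A)/2)cosh(τ(B)/2) + sinh(τ(A)/2)sinh(τ(B)/2)cos θ, where θ is the angle between the oriented axes and τ denotes translation length. -/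
/-!
Traces are conjugation invariant, so `A` and `B` both have trace `2 cosh (t / 2)` for their
respective `t`. The trace of `A * B` is `e^{a/2} B₀₀ + e^{-a/2} B₁₁`, and the diagonal of `B`
mixes `e^{±b/2}` with weights `cos² (θ/2)`, `sin² (θ/2)`; the half-angle formulas turn this into
`2 (cosh (a/2) cosh (b/2) + sinh (a/2) sinh (b/2) cos θ)`. Writing the bracket as
`cosh ((a-b)/2) + sinh (a/2) sinh (b/2) (1 + cos θ)` shows it exceeds `1` when `cos θ > -1`.
-/

open Real

/-- Inverse hyperbolic cosine. -/
noncomputable def arcosh (x : ℝ) : ℝ := Real.log (x + Real.sqrt (x ^ 2 - 1))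

/-- The translation length of a hyperbolic element of `SL(2,ℝ)`. -/
noncomputable def transLength (M : Matrix.SpecialLinearGroup (Fin 2) ℝ) : ℝ :=
  2 * _root_.arcosh (|Matrix.trace (M : Matrix (Fin 2) (Fin 2) ℝ)| / 2)

/-- The hyperbolic translation of length `t` along the imaginary axis, as an element of
`SL(2,ℝ)`. -/
noncomputable def hypTrans (t : ℝ) : Matrix.SpecialLinearGroup (Fin 2) ℝ :=
  ⟨!![Real.exp (t / 2), 0; 0, Real.exp (-(t / 2))], by
    simp [Matrix.det_fin_two_of, ← Real.exp_add]⟩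

/-- The rotation by angle `θ` about the point `i`, as an element of `SL(2,ℝ)`; conjugating
`hypTrans` by it produces a hyperbolic element whose axis passes through `i` at angle `θ`
to the imaginary axis. -/
noncomputable def rotAt (θ : ℝ) : Matrix.SpecialLinearGroup (Fin 2) ℝ :=
  ⟨!![Real.cos (θ / 2), Real.sin (θ / 2); -Real.sin (θ / 2), Real.cos (θ / 2)], by
    simp [Matrix.det_fin_two_of]; nlinarith [Real.sin_sq_add_cos_sq (θ / 2)]⟩

theorem Matrix.SpecialLinearGroup.trace_conj {n R : Type*} [Fintype n] [DecidableEq n]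
    [CommRing R] (g h : Matrix.SpecialLinearGroup n R) :
    Matrix.trace ((g * h * g⁻¹ : Matrix.SpecialLinearGroup n R) : Matrix n n R)
      = Matrix.trace (h : Matrix n n R) := by
  rw [Matrix.SpecialLinearGroup.coe_mul, Matrix.trace_mul_comm,
    ← Matrix.SpecialLinearGroup.coe_mul, ← mul_assoc, inv_mul_cancel, one_mul]

theorem arcosh_eq_real_arcosh (x : ℝ) : _root_.arcosh x = Real.arcosh x := rfl

theorem transLength_eq_of_trace_eq {M : Matrix.SpecialLinearGroup (Fin 2) ℝ} {t : ℝ}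
    (ht : 0 ≤ t) (h : Matrix.trace (M : Matrix (Fin 2) (Fin 2) ℝ) = 2 * cosh (t / 2)) :
    transLength M = t := by
  rw [transLength, h, abs_of_pos (by positivity), mul_div_cancel_left₀ _ two_ne_zero,
    arcosh_eq_real_arcosh, Real.arcosh_cosh (by positivity), mul_div_cancel₀ _ two_ne_zero]

theorem cosh_half_transLength_of_trace_eq {M : Matrix.SpecialLinearGroup (Fin 2) ℝ} {T : ℝ}
    (hT : 1 ≤ T) (h : Matrix.trace (M : Matrix (Fin 2) (Fin 2) ℝ) = 2 * T) :
    cosh (transLength M / 2) = T := by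
  rw [transLength, h, abs_of_pos (by positivity), mul_div_cancel_left₀ _ two_ne_zero,
    mul_div_cancel_left₀ _ two_ne_zero, arcosh_eq_real_arcosh, Real.cosh_arcosh hT]

theorem trace_hypTrans (t : ℝ) :
    Matrix.trace ((hypTrans t : Matrix.SpecialLinearGroup (Fin 2) ℝ) : Matrix (Fin 2) (Fin 2) ℝ)
      = 2 * cosh (t / 2) := by
  rw [hypTrans, Matrix.SpecialLinearGroup.coe_mk, Matrix.trace_fin_two_of, cosh_eq]
  ring

theorem trace_hypTrans_mul (t : ℝ) (M : Matrix (Fin 2) (Fin 2) ℝ) :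
    Matrix.trace ((hypTrans t : Matrix (Fin 2) (Fin 2) ℝ) * M)
      = exp (t / 2) * M 0 0 + exp (-(t / 2)) * M 1 1 := by
  rw [M.eta_fin_two]
  simp only [hypTrans, Matrix.mul_fin_two, Matrix.trace_fin_two, Matrix.of_apply,
    Matrix.cons_val_zero, Matrix.cons_val_one, Matrix.cons_val', Matrix.cons_val_fin_one]
  ring

theorem rotAt_conj_hypTrans_apply_zero_zero (θ t : ℝ) :
    ((rotAt θ * hypTrans t * (rotAt θ)⁻¹ : Matrix.SpecialLinearGroup (Fin 2) ℝ) :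
      Matrix (Fin 2) (Fin 2) ℝ) 0 0
      = cos (θ / 2) ^ 2 * exp (t / 2) + sin (θ / 2) ^ 2 * exp (-(t / 2)) := by
  rw [Matrix.SpecialLinearGroup.coe_mul, Matrix.SpecialLinearGroup.coe_mul,
    Matrix.SpecialLinearGroup.coe_inv]
  simp only [rotAt, hypTrans, Matrix.SpecialLinearGroup.coe_mk, Matrix.adjugate_fin_two_of,
    Matrix.mul_fin_two, Matrix.of_apply, Matrix.cons_val_zero, Matrix.cons_val',
    Matrix.cons_val_fin_one]
  ring

theorem rotAt_conj_hypTrans_apply_one_one (θ t : ℝ) :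
    ((rotAt θ * hypTrans t * (rotAt θ)⁻¹ : Matrix.SpecialLinearGroup (Fin 2) ℝ) :
      Matrix (Fin 2) (Fin 2) ℝ) 1 1
      = sin (θ / 2) ^ 2 * exp (t / 2) + cos (θ / 2) ^ 2 * exp (-(t / 2)) := by
  rw [Matrix.SpecialLinearGroup.coe_mul, Matrix.SpecialLinearGroup.coe_mul,
    Matrix.SpecialLinearGroup.coe_inv]
  simp only [rotAt, hypTrans, Matrix.SpecialLinearGroup.coe_mk, Matrix.adjugate_fin_two_of,
    Matrix.mul_fin_two, Matrix.of_apply, Matrix.cons_val_one, Matrix.cons_val',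
    Matrix.cons_val_fin_one]
  ring

theorem trace_hypTrans_mul_rotAt_conj_hypTrans (a b θ : ℝ) :
    Matrix.trace ((hypTrans a * (rotAt θ * hypTrans b * (rotAt θ)⁻¹) :
        Matrix.SpecialLinearGroup (Fin 2) ℝ) : Matrix (Fin 2) (Fin 2) ℝ)
      = 2 * (cosh (a / 2) * cosh (b / 2) + sinh (a / 2) * sinh (b / 2) * cos θ) := by
  have hcos : cos (θ / 2) ^ 2 = (1 + cos θ) / 2 := by
    rw [cos_sq, mul_div_cancel₀ θ two_ne_zero]; ring
  have hsin : sin (θ / 2) ^ 2 = (1 - cos θ) / 2 := by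
    rw [sin_sq, cos_sq, mul_div_cancel₀ θ two_ne_zero]; ring
  rw [Matrix.SpecialLinearGroup.coe_mul, trace_hypTrans_mul,
    rotAt_conj_hypTrans_apply_zero_zero, rotAt_conj_hypTrans_apply_one_one, hcos, hsin,
    cosh_eq, cosh_eq, sinh_eq, sinh_eq]
  ring

theorem one_lt_cosh_mul_cosh_add_sinh_mul_sinh_mul {x y c : ℝ} (hx : 0 < x) (hy : 0 < y)
    (hc : -1 < c) : 1 < cosh x * cosh y + sinh x * sinh y * c := by
  have hsinh : 0 < sinh x * sinh y := mul_pos (sinh_pos_iff.2 hx) (sinh_pos_iff.2 hy)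
  calc 1 ≤ cosh (x - y) := one_le_cosh _
    _ < cosh (x - y) + sinh x * sinh y * (c + 1) := by
      have := mul_pos hsinh (show 0 < c + 1 by linarith); linarith
    _ = cosh x * cosh y + sinh x * sinh y * c := by rw [cosh_sub]; ring

/-- If `A`, `B` are hyperbolic elements of `SL(2,ℝ)` whose axes cross in a single point at
angle `θ` (after conjugation: `A` translates by `a` along the imaginary axis and `B` is its
length-`b` analogue rotated by `θ` about `i`), then `A*B` is hyperbolic and
`cosh (τ(AB)/2) = cosh (τ(A)/2) cosh (τ(B)/2) + sinh (τ(A)/2) sinh (τ(B)/2) cos θ`. -/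
theorem trace_product_intersecting_axes (a b θ : ℝ) (ha : 0 < a) (hb : 0 < b)
    (hθ₀ : 0 < θ) (hθπ : θ < π)
    (A B : Matrix.SpecialLinearGroup (Fin 2) ℝ)
    (hA : A = hypTrans a) (hB : B = rotAt θ * hypTrans b * (rotAt θ)⁻¹) :
    transLength A = a ∧ transLength B = b ∧
    2 < |Matrix.trace ((A * B : Matrix.SpecialLinearGroup (Fin 2) ℝ) : Matrix (Fin 2) (Fin 2) ℝ)| ∧
    Real.cosh (transLength (A * B) / 2)
      = Real.cosh (a / 2) * Real.cosh (b / 2)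
        + Real.sinh (a / 2) * Real.sinh (b / 2) * Real.cos θ := by
  subst hA hB
  have hcos : -1 < cos θ := by
    simpa using cos_lt_cos_of_nonneg_of_le_pi hθ₀.le le_rfl hθπ
  have hT := one_lt_cosh_mul_cosh_add_sinh_mul_sinh_mul (half_pos ha) (half_pos hb) hcos
  have htrace := trace_hypTrans_mul_rotAt_conj_hypTrans a b θ
  refine ⟨transLength_eq_of_trace_eq ha.le (trace_hypTrans a),
    transLength_eq_of_trace_eq hb.le
      (by rw [Matrix.SpecialLinearGroup.trace_conj, trace_hypTrans]),
    ?_, cosh_half_transLength_of_trace_eq hT.le htrace⟩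
  rw [htrace, abs_of_pos (by linarith)]
  linarith
end
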